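/- arXiv:2404.08120 — 3 statements merged into one kernel-verified Lean document; each statement's English description precedes it below -/
import Mathlib

section
/- Let A be a d×d real matrix with spectral radius ρ(A) ≥ 1+ε_a for some ε_a > 0, and let C satisfy the strict observability condition that every eigenvector q of A has ‖Cq‖ ≥ ε_c‖q‖. Then for every integer t ≥ 0, the operator norm satisfies ‖CA^t‖ ≥ (1/√2)·ε_c·(1+ε_a)^t. -/
/-!
Complexify `A` and pick an eigenvector `q` whose eigenvalue `μ` realises the spectral radius, so
`|μ| ≥ 1 + εa`. Then `(C Aᵗ) q = μᵗ C q`, whence `‖(C Aᵗ) q‖ ≥ (1 + εa)ᵗ εc ‖q‖`. A real matrix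
has the same operator norm on complex vectors, since `‖M q‖² = ‖M (Re q)‖² + ‖M (Im q)‖²`; so
`‖C Aᵗ‖ ≥ εc (1 + εa)ᵗ`, which is even stronger than the claim by the factor `√2`.
-/

noncomputable def opNorm {𝕜 : Type*} [RCLike 𝕜] {m n : Type*} [Fintype m] [Fintype n]
    [DecidableEq n] (M : Matrix m n 𝕜) : ℝ :=
  ‖LinearMap.toContinuousLinearMap (Matrix.toEuclideanLin M)‖

noncomputable def enormC {ι : Type*} [Fintype ι] (v : ι → ℂ) : ℝ :=
  Real.sqrt (∑ i, ‖v i‖ ^ 2)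

open Matrix Complex

namespace Matrix

variable {m n : Type*} [Fintype n]

theorem exists_mulVec_eq_smul_of_mem_spectrum [DecidableEq n] {K : Type*} [Field K]
    {M : Matrix n n K} {μ : K} (hμ : μ ∈ spectrum K M) : ∃ q, q ≠ 0 ∧ M *ᵥ q = μ • q := by
  rw [← spectrum_toLin', ← Module.End.hasEigenvalue_iff_mem_spectrum] at hμ
  obtain ⟨q, hq⟩ := hμ.exists_hasEigenvector
  exact ⟨q, hq.2, by simpa using hq.apply_eq_smul⟩

theorem exists_mem_spectrum_le_norm [DecidableEq n] {𝕜 : Type*} [NormedField 𝕜]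
    (M : Matrix n n 𝕜) {r : ℝ} (hr : 0 < r) (h : ENNReal.ofReal r ≤ spectralRadius 𝕜 M) :
    ∃ μ ∈ spectrum 𝕜 M, r ≤ ‖μ‖ := by
  have hne : (spectrum 𝕜 M).Nonempty := by
    by_contra hempty
    rw [Set.not_nonempty_iff_eq_empty] at hempty
    have : r ≤ 0 := by simpa [spectralRadius, hempty] using h
    linarith
  obtain ⟨μ, hμ, hmax⟩ := Set.exists_max_image _ (‖·‖₊) M.finite_spectrum hne
  refine ⟨μ, hμ, ?_⟩
  have : spectralRadius 𝕜 M ≤ ‖μ‖₊ := iSup₂_le fun k hk => mod_cast hmax k hk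
  simpa using ENNReal.ofReal_le_iff_le_toReal (by simp) |>.1 (h.trans this)

theorem pow_mulVec_of_mulVec_eq_smul [DecidableEq n] {R : Type*} [CommSemiring R]
    {M : Matrix n n R} {μ : R} {q : n → R} (h : M *ᵥ q = μ • q) (t : ℕ) :
    (M ^ t) *ᵥ q = μ ^ t • q := by
  induction t with
  | zero => simp
  | succ t ih => rw [pow_succ, ← mulVec_mulVec, h, mulVec_smul, ih, smul_smul, pow_succ']

theorem norm_toLp_mulVec_le_opNorm [DecidableEq n] {𝕜 : Type*} [RCLike 𝕜] [Fintype m]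
    (M : Matrix m n 𝕜) (x : n → 𝕜) :
    ‖WithLp.toLp 2 (M *ᵥ x)‖ ≤ opNorm M * ‖WithLp.toLp 2 x‖ := by
  simpa [opNorm] using
    (LinearMap.toContinuousLinearMap (toEuclideanLin M)).le_opNorm (WithLp.toLp 2 x)

theorem re_map_ofReal_mulVec (M : Matrix m n ℝ) (q : n → ℂ) (i : m) :
    ((M.map ofReal *ᵥ q) i).re = (M *ᵥ fun j => (q j).re) i := by
  simp [mulVec, dotProduct, Complex.re_sum]

theorem im_map_ofReal_mulVec (M : Matrix m n ℝ) (q : n → ℂ) (i : m) :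
    ((M.map ofReal *ᵥ q) i).im = (M *ᵥ fun j => (q j).im) i := by
  simp [mulVec, dotProduct, Complex.im_sum]

end Matrix

section enormC

variable {ι : Type*} [Fintype ι]

theorem enormC_eq_norm (v : ι → ℂ) : enormC v = ‖WithLp.toLp 2 v‖ :=
  (EuclideanSpace.norm_eq _).symm

theorem enormC_sq (v : ι → ℂ) :
    enormC v ^ 2 =
      ‖WithLp.toLp 2 fun i => (v i).re‖ ^ 2 + ‖WithLp.toLp 2 fun i => (v i).im‖ ^ 2 := by
  simp only [enormC_eq_norm, EuclideanSpace.norm_sq_eq, ← Finset.sum_add_distrib,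
    Complex.sq_norm, Complex.normSq_apply, Real.norm_eq_abs, sq_abs]
  exact Finset.sum_congr rfl fun i _ => by ring

theorem enormC_smul (c : ℂ) (v : ι → ℂ) : enormC (c • v) = ‖c‖ * enormC v := by
  rw [enormC_eq_norm, enormC_eq_norm, WithLp.toLp_smul, norm_smul]

theorem enormC_pos {v : ι → ℂ} (hv : v ≠ 0) : 0 < enormC v := by
  rw [enormC_eq_norm, norm_pos_iff]
  simpa using hv

theorem enormC_map_ofReal_mulVec_le {κ : Type*} [Fintype κ] [DecidableEq ι] (M : Matrix κ ι ℝ)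
    (q : ι → ℂ) : enormC (M.map ofReal *ᵥ q) ≤ opNorm M * enormC q := by
  have hre := M.norm_toLp_mulVec_le_opNorm fun j => (q j).re
  have him := M.norm_toLp_mulVec_le_opNorm fun j => (q j).im
  have hM : 0 ≤ opNorm M := norm_nonneg _
  refine le_of_pow_le_pow_left₀ two_ne_zero (mul_nonneg hM (Real.sqrt_nonneg _)) ?_
  simp only [mul_pow, enormC_sq, M.re_map_ofReal_mulVec, M.im_map_ofReal_mulVec]
  nlinarith [pow_le_pow_left₀ (norm_nonneg _) hre 2, pow_le_pow_left₀ (norm_nonneg _) him 2]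

end enormC

theorem norm_pow_mul_enormC_le_opNorm_mul_pow {n m : Type*} [Fintype n] [DecidableEq n]
    [Fintype m] (A : Matrix n n ℝ) (C : Matrix m n ℝ) {μ : ℂ} {q : n → ℂ}
    (h : A.map ofReal *ᵥ q = μ • q) (t : ℕ) :
    ‖μ‖ ^ t * enormC (C.map ofReal *ᵥ q) ≤ opNorm (C * A ^ t) * enormC q := by
  have hcomplexify : (C * A ^ t).map ofReal = C.map ofReal * A.map ofReal ^ t :=
    (Matrix.map_mul (f := ofRealHom)).trans (congrArg _ (map_pow ofRealHom.mapMatrix A t))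
  have hmap : (C * A ^ t).map ofReal *ᵥ q = μ ^ t • (C.map ofReal *ᵥ q) := by
    rw [hcomplexify, ← mulVec_mulVec, pow_mulVec_of_mulVec_eq_smul h, mulVec_smul]
  simpa [hmap, enormC_smul] using enormC_map_ofReal_mulVec_le (C * A ^ t) q

theorem stmt_2_general {d dy : ℕ} (A : Matrix (Fin d) (Fin d) ℝ) (C : Matrix (Fin dy) (Fin d) ℝ)
    (εa εc : ℝ) (hεa : 0 < εa)
    (hρ : ENNReal.ofReal (1 + εa) ≤ spectralRadius ℂ (A.map Complex.ofReal))
    (hobs : ∀ (lam : ℂ) (q : Fin d → ℂ), q ≠ 0 →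
      (A.map Complex.ofReal).mulVec q = lam • q →
      εc * enormC q ≤ enormC ((C.map Complex.ofReal).mulVec q)) :
    ∀ t : ℕ, (1 / Real.sqrt 2) * εc * (1 + εa) ^ t ≤ opNorm (C * A ^ t) := by
  intro t
  obtain ⟨μ, hμ, hμ_norm⟩ := (A.map ofReal).exists_mem_spectrum_le_norm (by linarith) hρ
  obtain ⟨q, hq, hAq⟩ := exists_mulVec_eq_smul_of_mem_spectrum hμ
  have hgrowth : εc * (1 + εa) ^ t ≤ opNorm (C * A ^ t) := by
    refine le_of_mul_le_mul_right ?_ (enormC_pos hq)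
    calc εc * (1 + εa) ^ t * enormC q = (1 + εa) ^ t * (εc * enormC q) := by ring
      _ ≤ (1 + εa) ^ t * enormC (C.map ofReal *ᵥ q) := by gcongr; exact hobs μ q hq hAq
      _ ≤ ‖μ‖ ^ t * enormC (C.map ofReal *ᵥ q) := by gcongr; exact Real.sqrt_nonneg _
      _ ≤ opNorm (C * A ^ t) * enormC q := norm_pow_mul_enormC_le_opNorm_mul_pow A C hAq t
  have hsqrt : 1 ≤ Real.sqrt 2 := by simp [Real.one_le_sqrt]
  rcases le_total 0 (εc * (1 + εa) ^ t) with hpos | hneg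
  · calc 1 / Real.sqrt 2 * εc * (1 + εa) ^ t = 1 / Real.sqrt 2 * (εc * (1 + εa) ^ t) := by ring
      _ ≤ εc * (1 + εa) ^ t :=
        mul_le_of_le_one_left hpos (div_le_one_of_le₀ hsqrt (by positivity))
      _ ≤ opNorm (C * A ^ t) := hgrowth
  · calc 1 / Real.sqrt 2 * εc * (1 + εa) ^ t = 1 / Real.sqrt 2 * (εc * (1 + εa) ^ t) := by ring
      _ ≤ 0 := mul_nonpos_of_nonneg_of_nonpos (by positivity) hneg
      _ ≤ opNorm (C * A ^ t) := norm_nonneg _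

/-- If `ρ(A) ≥ 1 + ε_a` and every (complex) eigenvector `q` of `A` satisfies
`‖Cq‖ ≥ ε_c ‖q‖`, then for every `t ≥ 0`, `‖C A^t‖ ≥ (1/√2) ε_c (1+ε_a)^t`. -/
theorem stmt_2 {d dy : ℕ} (A : Matrix (Fin d) (Fin d) ℝ) (C : Matrix (Fin dy) (Fin d) ℝ)
    (εa εc : ℝ) (hεa : 0 < εa) (hεc : 0 < εc)
    (hρ : ENNReal.ofReal (1 + εa) ≤ spectralRadius ℂ (A.map Complex.ofReal))
    (hobs : ∀ (lam : ℂ) (q : Fin d → ℂ), q ≠ 0 →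
      (A.map Complex.ofReal).mulVec q = lam • q →
      εc * enormC q ≤ enormC ((C.map Complex.ofReal).mulVec q)) :
    ∀ t : ℕ, (1 / Real.sqrt 2) * εc * (1 + εa) ^ t ≤ opNorm (C * A ^ t) :=
  stmt_2_general A C εa εc hεa hρ hobs
end

section
/- Let A ∈ ℝ^{d×d} be stable, B ∈ ℝ^{d×d_u}, and P the solution of AᵀPA − P + CᵀC = 0. With T_{τ−1} the block Toeplitz matrix with blocks CA^{j−i}, and D = diag(B,…,B) (τ−1 copies), we have tr(Dᵀ T_{τ−1}ᵀ T_{τ−1} D) ≤ τ · tr(Bᵀ P B). -/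
/-!
Iterating the Lyapunov equation `P = AᵀPA + CᵀC` gives
`P = ∑_{k<N} (Aᵀ)ᵏ CᵀC Aᵏ + (Aᵀ)ᴺ P Aᴺ`, and the remainder tends to `0` because `ρ(A) < 1`
forces `Aᴺ → 0` (Gelfand's formula). The partial sums of `tr((C Aᵏ B)ᵀ (C Aᵏ B)) ≥ 0` therefore
increase to `tr(BᵀPB)`, so each of them is at most `tr(BᵀPB)`. The `j`-th block column of `T D`
consists of the blocks `C Aᵏ B`, `k ≤ j`, so `tr(Dᵀ Tᵀ T D)` is a sum of `τ - 1` such partial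
sums.
-/

open Filter Topology Finset Matrix
open scoped Kronecker

theorem tendsto_pow_atTop_nhds_zero_of_spectralRadius_lt_one {A : Type*} [NormedRing A]
    [NormedAlgebra ℂ A] [CompleteSpace A] {a : A} (ha : spectralRadius ℂ a < 1) :
    Tendsto (a ^ ·) atTop (𝓝 0) := by
  obtain ⟨r, hρr, hr1⟩ := ENNReal.lt_iff_exists_nnreal_btwn.mp ha
  have hbound : ∀ᶠ n : ℕ in atTop, ‖a ^ n‖ ≤ (r : ℝ) ^ n := by
    have hgelfand := spectrum.pow_nnnorm_pow_one_div_tendsto_nhds_spectralRadius a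
    filter_upwards [hgelfand.eventually_lt_const hρr, eventually_gt_atTop 0] with n hn hn0
    rw [one_div, ENNReal.rpow_inv_lt_iff (by positivity), ENNReal.rpow_natCast] at hn
    exact_mod_cast hn.le
  exact squeeze_zero_norm' hbound
    (tendsto_pow_atTop_nhds_zero_of_lt_one r.2 (by exact_mod_cast hr1))

theorem sum_range_pow_mul_mul_pow_add_eq {R : Type*} [Semiring R] {L M Q P : R}
    (h : L * P * M + Q = P) (n : ℕ) :
    ∑ k ∈ range n, L ^ k * Q * M ^ k + L ^ n * P * M ^ n = P := by
  induction n with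
  | zero => simp
  | succ n ih =>
    calc ∑ k ∈ range (n + 1), L ^ k * Q * M ^ k + L ^ (n + 1) * P * M ^ (n + 1)
        = ∑ k ∈ range n, L ^ k * Q * M ^ k + L ^ n * (L * P * M + Q) * M ^ n := by
          rw [sum_range_succ, pow_succ, pow_succ']
          simp only [mul_add, add_mul, mul_assoc]
          abel
      _ = P := by rw [h, ih]

theorem tendsto_sum_range_pow_mul_mul_pow {R : Type*} [Ring R] [TopologicalSpace R]
    [IsTopologicalRing R] {L M Q P : R} (h : L * P * M + Q = P)
    (hL : Tendsto (L ^ ·) atTop (𝓝 0)) (hM : Tendsto (M ^ ·) atTop (𝓝 0)) :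
    Tendsto (fun n => ∑ k ∈ range n, L ^ k * Q * M ^ k) atTop (𝓝 P) := by
  have hrem : Tendsto (fun n => L ^ n * P * M ^ n) atTop (𝓝 0) := by
    simpa using (hL.mul_const P).mul hM
  simpa [eq_sub_of_add_eq (sum_range_pow_mul_mul_pow_add_eq h _)] using
    (tendsto_const_nhds (x := P)).sub hrem

theorem Fin.sum_ite_le_sub_eq_sum_range {M : Type*} [AddCommMonoid M] {r j : ℕ} (hj : j < r)
    (g : ℕ → M) :
    ∑ i : Fin r, (if (i : ℕ) ≤ j then g (j - i) else 0) = ∑ k ∈ range (j + 1), g k := by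
  rw [Fin.sum_univ_eq_sum_range (fun i => if i ≤ j then g (j - i) else 0), ← sum_filter,
    ← sum_range_reflect]
  congr 1
  ext i
  simp only [mem_filter, mem_range]
  omega

namespace Matrix

variable {m n o R : Type*}

theorem tendsto_pow_atTop_nhds_zero_of_spectralRadius_lt_one [Fintype n] [DecidableEq n]
    {M : Matrix n n ℂ} (hM : spectralRadius ℂ M < 1) :
    Tendsto (M ^ ·) atTop (𝓝 0) :=
  let _ := Matrix.linftyOpNormedRing (n := n) (α := ℂ)
  let _ := Matrix.linftyOpNormedAlgebra (n := n) (R := ℂ) (α := ℂ)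
  _root_.tendsto_pow_atTop_nhds_zero_of_spectralRadius_lt_one hM

theorem tendsto_pow_atTop_nhds_zero_of_spectralRadius_map_lt_one [Fintype n] [DecidableEq n]
    {A : Matrix n n ℝ} (hA : spectralRadius ℂ (A.map Complex.ofReal) < 1) :
    Tendsto (A ^ ·) atTop (𝓝 0) := by
  have hmap (k : ℕ) : A ^ k = ((A.map Complex.ofReal) ^ k).map Complex.re := by
    have h : (A.map Complex.ofReal) ^ k = (A ^ k).map Complex.ofReal :=
      (map_pow Complex.ofRealHom.mapMatrix A k).symm
    rw [h]
    ext
    simp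
  simpa [Function.comp_def, ← hmap] using
    ((continuous_id.matrix_map Complex.continuous_re).tendsto 0).comp
      (tendsto_pow_atTop_nhds_zero_of_spectralRadius_lt_one hA)

theorem trace_transpose_mul_self_nonneg [Fintype m] [Fintype n] (N : Matrix m n ℝ) :
    0 ≤ (Nᵀ * N).trace := by
  rw [← vec_dotProduct_vec]
  exact sum_nonneg fun _ _ => mul_self_nonneg _

theorem sum_range_trace_gram_le [Fintype n] [DecidableEq n] [Fintype m] [Fintype o]
    {A : Matrix n n ℝ} (hA : spectralRadius ℂ (A.map Complex.ofReal) < 1)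
    {C : Matrix m n ℝ} {P : Matrix n n ℝ} (hP : Aᵀ * P * A + Cᵀ * C = P) (B : Matrix n o ℝ)
    (N : ℕ) :
    ∑ k ∈ range N, ((C * A ^ k * B)ᵀ * (C * A ^ k * B)).trace ≤ (Bᵀ * P * B).trace := by
  have hpow := tendsto_pow_atTop_nhds_zero_of_spectralRadius_map_lt_one hA
  have hpowT : Tendsto (Aᵀ ^ ·) atTop (𝓝 0) := by
    simpa [Function.comp_def] using (continuous_id.matrix_transpose.tendsto 0).comp hpow
  have hsum (K : ℕ) : ∑ k ∈ range K, ((C * A ^ k * B)ᵀ * (C * A ^ k * B)).trace =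
      (Bᵀ * (∑ k ∈ range K, Aᵀ ^ k * (Cᵀ * C) * A ^ k) * B).trace := by
    simp only [transpose_mul, transpose_pow, Matrix.mul_sum, Matrix.sum_mul, trace_sum,
      Matrix.mul_assoc]
  have hlim : Tendsto (fun K => ∑ k ∈ range K, ((C * A ^ k * B)ᵀ * (C * A ^ k * B)).trace)
      atTop (𝓝 (Bᵀ * P * B).trace) := by
    rw [funext hsum]
    exact ((continuous_const.matrix_mul continuous_id).matrix_mul
      continuous_const).matrix_trace.tendsto P |>.comp
        (tendsto_sum_range_pow_mul_mul_pow hP hpowT hpow)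
  refine Monotone.ge_of_tendsto (monotone_nat_of_le_succ fun K => ?_) hlim N
  rw [sum_range_succ]
  exact le_add_of_nonneg_right (trace_transpose_mul_self_nonneg _)

def blockToeplitz [Zero R] (r c : ℕ) (M : ℕ → Matrix m n R) :
    Matrix (Fin r × m) (Fin c × n) R :=
  of fun p q => if (p.1 : ℕ) ≤ q.1 then M (q.1 - p.1) p.2 q.2 else 0

theorem blockToeplitz_mul_one_kronecker [Fintype n] [NonAssocSemiring R] (r c : ℕ)
    (M : ℕ → Matrix m n R) (B : Matrix n o R) :
    blockToeplitz r c M * ((1 : Matrix (Fin c) (Fin c) R) ⊗ₖ B) =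
      blockToeplitz r c fun k => M k * B := by
  ext p q
  rw [mul_apply, Fintype.sum_prod_type, sum_eq_single q.1]
  · by_cases h : (p.1 : ℕ) ≤ q.1 <;> simp [blockToeplitz, h, mul_apply]
  · intro j _ hj
    simp [one_apply_ne hj]
  · simp

theorem trace_transpose_blockToeplitz_mul_self [Fintype m] [Fintype n]
    [NonUnitalNonAssocSemiring R] {r c : ℕ} (hcr : c ≤ r) (M : ℕ → Matrix m n R) :
    ((blockToeplitz r c M)ᵀ * blockToeplitz r c M).trace =
      ∑ j : Fin c, ∑ k ∈ range (j + 1), ((M k)ᵀ * M k).trace := by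
  simp only [trace, diag, mul_apply, transpose_apply, Fintype.sum_prod_type]
  refine sum_congr rfl fun j _ => ?_
  rw [← Fin.sum_ite_le_sub_eq_sum_range (j.isLt.trans_le hcr), sum_comm]
  refine sum_congr rfl fun i _ => ?_
  by_cases h : (i : ℕ) ≤ j <;> simp [blockToeplitz, h]

end Matrix

theorem stmt_5_general {d dy du : ℕ} (A : Matrix (Fin d) (Fin d) ℝ) (B : Matrix (Fin d) (Fin du) ℝ)
    (C : Matrix (Fin dy) (Fin d) ℝ) (P : Matrix (Fin d) (Fin d) ℝ)
    (hρ : spectralRadius ℂ (A.map Complex.ofReal) < 1)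
    (hLyap : Aᵀ * P * A - P + Cᵀ * C = 0)
    (τ : ℕ)
    (T : Matrix (Fin τ × Fin dy) (Fin (τ - 1) × Fin d) ℝ)
    (hT : T = Matrix.of fun p q =>
      if (p.1 : ℕ) ≤ (q.1 : ℕ) then (C * A ^ ((q.1 : ℕ) - (p.1 : ℕ))) p.2 q.2 else 0)
    (D : Matrix (Fin (τ - 1) × Fin d) (Fin (τ - 1) × Fin du) ℝ)
    (hD : D = Matrix.of fun p q => if p.1 = q.1 then B p.2 q.2 else 0) :
    (Dᵀ * Tᵀ * T * D).trace ≤ (τ : ℝ) * (Bᵀ * P * B).trace := by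
  have hP : Aᵀ * P * A + Cᵀ * C = P := by
    rwa [sub_add_eq_add_sub, sub_eq_zero] at hLyap
  have hD_kronecker : D = 1 ⊗ₖ B := by
    ext p q
    by_cases h : p.1 = q.1 <;> simp [hD, h, one_apply]
  have hTD : T * D = blockToeplitz τ (τ - 1) fun k => C * A ^ k * B := by
    rw [hT, hD_kronecker]
    exact blockToeplitz_mul_one_kronecker τ (τ - 1) (fun k => C * A ^ k) B
  have hgram : Dᵀ * Tᵀ * T * D = (T * D)ᵀ * (T * D) := by
    simp only [transpose_mul, Matrix.mul_assoc]
  have htrace_nonneg : 0 ≤ (Bᵀ * P * B).trace := by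
    simpa using sum_range_trace_gram_le hρ hP B 0
  rw [hgram, hTD, trace_transpose_blockToeplitz_mul_self (Nat.sub_le τ 1)]
  calc ∑ j : Fin (τ - 1), ∑ k ∈ range (j + 1), ((C * A ^ k * B)ᵀ * (C * A ^ k * B)).trace
      ≤ ∑ _j : Fin (τ - 1), (Bᵀ * P * B).trace :=
        sum_le_sum fun j _ => sum_range_trace_gram_le hρ hP B _
    _ = ((τ - 1 : ℕ) : ℝ) * (Bᵀ * P * B).trace := by simp
    _ ≤ τ * (Bᵀ * P * B).trace := by
        gcongr
        exact_mod_cast Nat.sub_le τ 1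

/-- For stable `A`, input matrix `B`, and Lyapunov solution `P` (`AᵀPA − P + CᵀC = 0`), with
`T_{τ−1}` the block upper-triangular Toeplitz matrix with blocks `C A^{j−i}` and
`D = diag(B,…,B)` (`τ−1` copies), we have `tr(Dᵀ T_{τ−1}ᵀ T_{τ−1} D) ≤ τ · tr(Bᵀ P B)`. -/
theorem stmt_5 {d dy du : ℕ} (A : Matrix (Fin d) (Fin d) ℝ) (B : Matrix (Fin d) (Fin du) ℝ)
    (C : Matrix (Fin dy) (Fin d) ℝ) (P : Matrix (Fin d) (Fin d) ℝ)
    (hρ : spectralRadius ℂ (A.map Complex.ofReal) < 1)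
    (hLyap : Aᵀ * P * A - P + Cᵀ * C = 0)
    (τ : ℕ) (hτ : 2 ≤ τ)
    (T : Matrix (Fin τ × Fin dy) (Fin (τ - 1) × Fin d) ℝ)
    (hT : T = Matrix.of fun p q =>
      if (p.1 : ℕ) ≤ (q.1 : ℕ) then (C * A ^ ((q.1 : ℕ) - (p.1 : ℕ))) p.2 q.2 else 0)
    (D : Matrix (Fin (τ - 1) × Fin d) (Fin (τ - 1) × Fin du) ℝ)
    (hD : D = Matrix.of fun p q => if p.1 = q.1 then B p.2 q.2 else 0) :
    (Dᵀ * Tᵀ * T * D).trace ≤ (τ : ℝ) * (Bᵀ * P * B).trace :=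
  stmt_5_general A B C P hρ hLyap τ T hT D hD
end

section
/- Let (Z_t)_{t≥1} be a sequence of real random variables adapted to a filtration (F_t) satisfying the (1, v, q)-block martingale small-ball property: Pr(Z_{t+1}² > v² | F_t) ≥ q almost surely for all t ≥ 0. Then for every T ≥ 1, Pr(Σ_{t=1}^{T} Z_t² ≤ v²q²T/8) ≤ exp(−Tq²/8). -/
/-!
Let `N_n` count the events `{v² < Z_t²}`, `1 ≤ t ≤ n`. Since `exp (-1_A) = 1 - (1 - e⁻¹) 1_A`,
pulling the `ℱ_n`-measurable factor `exp (-N_n)` out of a conditional expectation gives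
`E[exp (-N_{n+1})] ≤ (1 - (1 - e⁻¹) q) E[exp (-N_n)]`, so `E[exp (-N_T)] ≤ (1 - (1 - e⁻¹) q)^T`.
On the event `∑ Z_t² ≤ v²q²T/8` at most `q²T/8` of the `Z_t²` exceed `v²`, so the Chernoff
bound with parameter `-1` bounds its probability by `exp (q²T/8) (1 - (1 - e⁻¹) q)^T`, which is
at most `exp (-Tq²/8)` because `1 - e⁻¹ ≥ 1/2` and `q ≤ 1`.
-/

section

open MeasureTheory ProbabilityTheory Finset Real

variable {Ω : Type*} {m0 : MeasurableSpace Ω} {μ : Measure Ω}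

theorem mul_integral_le_integral_mul_of_le_condExp [IsFiniteMeasure μ] {m : MeasurableSpace Ω}
    (hm : m ≤ m0) {f g : Ω → ℝ} {q C : ℝ} (hf : StronglyMeasurable[m] f) (hf0 : ∀ ω, 0 ≤ f ω)
    (hfC : ∀ ω, f ω ≤ C) (hg : Integrable g μ) (hgq : ∀ᵐ ω ∂μ, q ≤ μ[g | m] ω) :
    q * ∫ ω, f ω ∂μ ≤ ∫ ω, f ω * g ω ∂μ := by
  have hf_bound : ∀ᵐ ω ∂μ, ‖f ω‖ ≤ C :=
    ae_of_all _ fun ω => by rw [Real.norm_of_nonneg (hf0 ω)]; exact hfC ω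
  have hf_int : Integrable f μ :=
    .of_bound (hf.mono hm).aestronglyMeasurable C hf_bound
  calc q * ∫ ω, f ω ∂μ = ∫ ω, f ω * q ∂μ := by rw [← integral_const_mul]; simp_rw [mul_comm]
    _ ≤ ∫ ω, f ω * μ[g | m] ω ∂μ :=
        integral_mono_ae (hf_int.mul_const q)
          (integrable_condExp.bdd_mul (hf.mono hm).aestronglyMeasurable hf_bound)
          (by filter_upwards [hgq] with ω hω using mul_le_mul_of_nonneg_left hω (hf0 ω))
    _ = ∫ ω, μ[f * g | m] ω ∂μ :=
        integral_congr_ae (condExp_stronglyMeasurable_mul_of_bound hm hf hg C hf_bound).symm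
    _ = ∫ ω, f ω * g ω ∂μ := integral_condExp hm

theorem card_filter_lt_le_of_sum_le {ι : Type*} {I : Finset ι} {x : ι → ℝ} {b a : ℝ}
    (hx : ∀ i ∈ I, 0 ≤ x i) (hb : 0 ≤ b) (ha : 0 ≤ a) (h : ∑ i ∈ I, x i ≤ b * a) :
    (#{i ∈ I | b < x i} : ℝ) ≤ a := by
  obtain hempty | hne := (I.filter (b < x ·)).eq_empty_or_nonempty
  · simpa [hempty] using ha
  have : b * #{i ∈ I | b < x i} < b * a :=
    calc b * #{i ∈ I | b < x i} = ∑ i ∈ I with b < x i, b := by simp [mul_comm]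
      _ < ∑ i ∈ I with b < x i, x i := sum_lt_sum_of_nonempty hne fun i hi => (mem_filter.1 hi).2
      _ ≤ ∑ i ∈ I, x i := sum_le_sum_of_subset_of_nonneg (filter_subset _ _) fun i hi _ => hx i hi
      _ ≤ b * a := h
  exact (lt_of_mul_lt_mul_left this hb).le

noncomputable def eventCount (s : ℕ → Set Ω) (n : ℕ) (ω : Ω) : ℝ :=
  ∑ t ∈ Icc 1 n, (s t).indicator 1 ω

variable {s : ℕ → Set Ω}

theorem eventCount_eq_card (n : ℕ) (ω : Ω) [DecidablePred (ω ∈ s ·)] :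
    eventCount s n ω = #{t ∈ Icc 1 n | ω ∈ s t} := by
  simp only [eventCount, Set.indicator_apply, Pi.one_apply, sum_boole]

theorem eventCount_succ (n : ℕ) (ω : Ω) :
    eventCount s (n + 1) ω = eventCount s n ω + (s (n + 1)).indicator 1 ω :=
  sum_Icc_succ_top (by omega) _

theorem exp_neg_indicator_one (A : Set Ω) (ω : Ω) :
    exp (-A.indicator 1 ω) = 1 - (1 - exp (-1)) * A.indicator 1 ω := by
  by_cases h : ω ∈ A <;> simp [h]

theorem eventCount_nonneg (n : ℕ) (ω : Ω) : 0 ≤ eventCount s n ω :=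
  sum_nonneg fun _ _ => Set.indicator_nonneg (fun _ _ => zero_le_one) ω

variable {ℱ : Filtration ℕ m0}

theorem stronglyMeasurable_eventCount (hs : ∀ t, 1 ≤ t → MeasurableSet[ℱ t] (s t)) (n : ℕ) :
    StronglyMeasurable[ℱ n] (eventCount s n) := by
  have : eventCount s n = ∑ t ∈ Icc 1 n, (s t).indicator 1 := by
    ext ω; simp [eventCount]
  rw [this]
  refine Finset.stronglyMeasurable_sum _ fun t ht => ?_
  obtain ⟨ht1, htn⟩ := mem_Icc.1 ht
  exact (stronglyMeasurable_const.indicator (hs t ht1)).mono (ℱ.mono htn)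

theorem integral_exp_neg_eventCount_succ_le [IsFiniteMeasure μ]
    (hs : ∀ t, 1 ≤ t → MeasurableSet[ℱ t] (s t)) {q : ℝ} (n : ℕ)
    (hq : ∀ᵐ ω ∂μ, q ≤ μ[(s (n + 1)).indicator 1 | ℱ n] ω) :
    ∫ ω, exp (-eventCount s (n + 1) ω) ∂μ ≤
      (1 - (1 - exp (-1)) * q) * ∫ ω, exp (-eventCount s n ω) ∂μ := by
  set c := 1 - exp (-1)
  set P := fun ω => exp (-eventCount s n ω)
  set B := (s (n + 1)).indicator (1 : Ω → ℝ)
  have hc : 0 ≤ c := by have := exp_neg_one_lt_half; simp only [c]; linarith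
  have hP : StronglyMeasurable[ℱ n] P :=
    continuous_exp.comp_stronglyMeasurable (stronglyMeasurable_eventCount hs n).neg
  have hP0 ω : 0 ≤ P ω := (exp_pos _).le
  have hP1 ω : P ω ≤ 1 := exp_le_one_iff.2 (neg_nonpos.2 (eventCount_nonneg n ω))
  have hP_bound : ∀ᵐ ω ∂μ, ‖P ω‖ ≤ 1 :=
    ae_of_all _ fun ω => by rw [Real.norm_of_nonneg (hP0 ω)]; exact hP1 ω
  have hP_int : Integrable P μ := .of_bound (hP.mono (ℱ.le n)).aestronglyMeasurable 1 hP_bound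
  have hB_int : Integrable B μ :=
    (integrable_const 1).indicator (ℱ.le _ _ (hs (n + 1) (by omega)))
  have hPB_int : Integrable (fun ω => P ω * B ω) μ :=
    hB_int.bdd_mul (hP.mono (ℱ.le n)).aestronglyMeasurable hP_bound
  have hsplit : (fun ω => exp (-eventCount s (n + 1) ω)) = fun ω => P ω - c * (P ω * B ω) := by
    ext ω
    rw [eventCount_succ, neg_add, exp_add, exp_neg_indicator_one]
    ring
  have hPB : q * ∫ ω, P ω ∂μ ≤ ∫ ω, P ω * B ω ∂μ :=
    mul_integral_le_integral_mul_of_le_condExp (ℱ.le n) hP hP0 hP1 hB_int hq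
  rw [hsplit, integral_sub hP_int (hPB_int.const_mul c), integral_const_mul]
  linarith [mul_le_mul_of_nonneg_left hPB hc]

theorem integral_exp_neg_eventCount_le [IsProbabilityMeasure μ]
    (hs : ∀ t, 1 ≤ t → MeasurableSet[ℱ t] (s t)) {q : ℝ} (hq1 : q ≤ 1)
    (hq : ∀ n, ∀ᵐ ω ∂μ, q ≤ μ[(s (n + 1)).indicator 1 | ℱ n] ω) (n : ℕ) :
    ∫ ω, exp (-eventCount s n ω) ∂μ ≤ (1 - (1 - exp (-1)) * q) ^ n := by
  have hrate : 0 ≤ 1 - (1 - exp (-1)) * q := by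
    nlinarith [exp_pos (-1), exp_neg_one_lt_half]
  induction n with
  | zero => simp [eventCount]
  | succ n ih =>
    calc ∫ ω, exp (-eventCount s (n + 1) ω) ∂μ
        ≤ (1 - (1 - exp (-1)) * q) * ∫ ω, exp (-eventCount s n ω) ∂μ :=
          integral_exp_neg_eventCount_succ_le hs n (hq n)
      _ ≤ (1 - (1 - exp (-1)) * q) ^ (n + 1) := by
          rw [pow_succ']; exact mul_le_mul_of_nonneg_left ih hrate

theorem measureReal_eventCount_le_le [IsProbabilityMeasure μ]
    (hs : ∀ t, 1 ≤ t → MeasurableSet[ℱ t] (s t)) {q : ℝ} (hq1 : q ≤ 1)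
    (hq : ∀ n, ∀ᵐ ω ∂μ, q ≤ μ[(s (n + 1)).indicator 1 | ℱ n] ω) (n : ℕ) (a : ℝ) :
    μ.real {ω | eventCount s n ω ≤ a} ≤ exp a * (1 - (1 - exp (-1)) * q) ^ n := by
  have h_int : Integrable (fun ω => exp (-1 * eventCount s n ω)) μ := by
    refine .of_bound (continuous_exp.comp_stronglyMeasurable
      (((stronglyMeasurable_eventCount hs n).mono (ℱ.le n)).const_mul (-1))).aestronglyMeasurable 1
      (ae_of_all _ fun ω => ?_)
    rw [Real.norm_of_nonneg (exp_pos _).le, exp_le_one_iff]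
    linarith [eventCount_nonneg (s := s) n ω]
  calc μ.real {ω | eventCount s n ω ≤ a} ≤ exp (-(-1) * a) * mgf (eventCount s n) μ (-1) :=
        measure_le_le_exp_mul_mgf a (by norm_num) h_int
    _ ≤ exp a * (1 - (1 - exp (-1)) * q) ^ n := by
        simp only [neg_neg, one_mul, mgf, neg_one_mul]
        exact mul_le_mul_of_nonneg_left (integral_exp_neg_eventCount_le hs hq1 hq n) (exp_pos a).le

theorem exp_mul_one_sub_pow_le {q : ℝ} (hq0 : 0 ≤ q) (hq1 : q ≤ 1) (n : ℕ) :
    exp (q ^ 2 * n / 8) * (1 - (1 - exp (-1)) * q) ^ n ≤ exp (-n * q ^ 2 / 8) := by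
  set c := 1 - exp (-1)
  have hc : 1 / 2 ≤ c := by have := exp_neg_one_lt_half; simp only [c]; linarith
  have hpow : (1 - c * q) ^ n ≤ exp (-(c * q) * n) := by
    rw [mul_comm _ (n : ℝ), exp_nat_mul]
    exact pow_le_pow_left₀ (by nlinarith [exp_pos (-1)]) (by linarith [add_one_le_exp (-(c * q))]) n
  calc exp (q ^ 2 * n / 8) * (1 - c * q) ^ n ≤ exp (q ^ 2 * n / 8) * exp (-(c * q) * n) :=
        mul_le_mul_of_nonneg_left hpow (exp_pos _).le
    _ ≤ exp (-n * q ^ 2 / 8) := by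
        rw [← exp_add, exp_le_exp]
        have : q ^ 2 / 4 ≤ c * q := by nlinarith
        nlinarith [(Nat.cast_nonneg n : (0 : ℝ) ≤ n)]

end

open MeasureTheory

theorem stmt_11_general {Ω : Type*} {m0 : MeasurableSpace Ω} (μ : Measure Ω) [IsProbabilityMeasure μ]
    (ℱ : Filtration ℕ m0) (Z : ℕ → Ω → ℝ) (hadapted : ∀ t : ℕ, 1 ≤ t → StronglyMeasurable[ℱ t] (Z t))
    (v q : ℝ) (hq : 0 < q) (hq1 : q ≤ 1)
    (hBMSB : ∀ t : ℕ, ∀ᵐ ω ∂μ,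
      q ≤ condExp (ℱ t) μ (Set.indicator {ω' | v ^ 2 < (Z (t + 1) ω') ^ 2} (fun _ => (1 : ℝ))) ω) :
    ∀ T : ℕ, 1 ≤ T →
      μ {ω | ∑ t ∈ Finset.Icc 1 T, (Z t ω) ^ 2 ≤ v ^ 2 * q ^ 2 * T / 8} ≤
        ENNReal.ofReal (Real.exp (-(T : ℝ) * q ^ 2 / 8)) := by
  intro T _
  set s : ℕ → Set Ω := fun t => {ω | v ^ 2 < Z t ω ^ 2}
  have hs : ∀ t, 1 ≤ t → MeasurableSet[ℱ t] (s t) := fun t ht =>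
    measurableSet_lt measurable_const ((hadapted t ht).measurable.pow_const 2)
  have hsub : {ω | ∑ t ∈ Finset.Icc 1 T, Z t ω ^ 2 ≤ v ^ 2 * q ^ 2 * T / 8} ⊆
      {ω | eventCount s T ω ≤ q ^ 2 * T / 8} := by
    intro ω hω
    classical
    change eventCount s T ω ≤ _
    rw [eventCount_eq_card]
    refine card_filter_lt_le_of_sum_le (fun t _ => sq_nonneg _) (sq_nonneg v) (by positivity) ?_
    rwa [← mul_div_assoc, ← mul_assoc]
  calc μ {ω | ∑ t ∈ Finset.Icc 1 T, Z t ω ^ 2 ≤ v ^ 2 * q ^ 2 * T / 8}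
      ≤ μ {ω | eventCount s T ω ≤ q ^ 2 * T / 8} := measure_mono hsub
    _ = ENNReal.ofReal (μ.real {ω | eventCount s T ω ≤ q ^ 2 * T / 8}) := by
        rw [ofReal_measureReal]
    _ ≤ ENNReal.ofReal (Real.exp (-(T : ℝ) * q ^ 2 / 8)) := ENNReal.ofReal_le_ofReal <|
        (measureReal_eventCount_le_le hs hq1 hBMSB T _).trans (exp_mul_one_sub_pow_le hq.le hq1 T)

/-- BMSB anti-concentration (block size 1): if `(Z_t)_{t≥1}` is adapted to `(ℱ_t)` and
`Pr(Z_{t+1}² > v² | ℱ_t) ≥ q` a.s. for all `t ≥ 0`, then for all `T ≥ 1`,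
`Pr(Σ_{t=1}^T Z_t² ≤ v²q²T/8) ≤ exp(−Tq²/8)`. -/
theorem stmt_11 {Ω : Type*} {m0 : MeasurableSpace Ω} (μ : Measure Ω) [IsProbabilityMeasure μ]
    (ℱ : Filtration ℕ m0) (Z : ℕ → Ω → ℝ) (hadapted : ∀ t : ℕ, 1 ≤ t → StronglyMeasurable[ℱ t] (Z t))
    (v q : ℝ) (hv : 0 < v) (hq : 0 < q) (hq1 : q ≤ 1)
    (hBMSB : ∀ t : ℕ, ∀ᵐ ω ∂μ,
      q ≤ condExp (ℱ t) μ (Set.indicator {ω' | v ^ 2 < (Z (t + 1) ω') ^ 2} (fun _ => (1 : ℝ))) ω) :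
    ∀ T : ℕ, 1 ≤ T →
      μ {ω | ∑ t ∈ Finset.Icc 1 T, (Z t ω) ^ 2 ≤ v ^ 2 * q ^ 2 * T / 8} ≤
        ENNReal.ofReal (Real.exp (-(T : ℝ) * q ^ 2 / 8)) :=
  stmt_11_general μ ℱ Z hadapted v q hq hq1 hBMSB
end
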